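/- Let D be a central division algebra of degree n over a field K and let P/K be a field extension of degree n. Then P admits a K-algebra embedding into D if and only if P splits D, i.e., D ⊗_K P ≅ M_n(P) as P-algebras. -/

import Mathlib

/-!
If `P` embeds in `D`, then `D` is a right `P`-vector space, and left multiplications together with
the `P`-scalars give a `P`-algebra map `P ⊗[K] D → End_P(D)`. It is injective by the independence
lemma for central division algebras (if `∑ aᵢ x cᵢ = 0` for all `x` with `K`-independent `cᵢ`, then
all `aᵢ = 0`), hence bijective, since both sides have `P`-dimension `n²`.

Conversely, `P ⊗[K] D ≃ M_n(P)` makes `V = Pⁿ` a `D`-module on which `P` acts `D`-linearly.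
As `dim_K V = n² = dim_K D`, `V ≃ D` as `D`-modules, so `P` maps into `End_D(D) = Dᵐᵒᵖ`; since `P`
is commutative, this is an embedding of `P` into `D`.
-/

open scoped TensorProduct
open Module

theorem sum_commutator_mul_mul_eq_zero {R ι : Type*} [Ring R] {s : Finset ι} {a c : ι → R}
    (h : ∀ x, ∑ i ∈ s, a i * x * c i = 0) (w x : R) :
    ∑ i ∈ s, (a i * w - w * a i) * x * c i = 0 := by
  have key : ∑ i ∈ s, (a i * w - w * a i) * x * c i =
      ∑ i ∈ s, a i * (w * x) * c i - w * ∑ i ∈ s, a i * x * c i := by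
    rw [Finset.mul_sum, ← Finset.sum_sub_distrib]
    exact Finset.sum_congr rfl fun i _ => by noncomm_ring
  rw [key, h, h, mul_zero, sub_zero]

theorem Algebra.IsCentral.eq_zero_of_forall_sum_mul_mul_eq_zero {K D ι : Type*} [CommRing K]
    [DivisionRing D] [Algebra K D] [Algebra.IsCentral K D] {c : ι → D}
    (hc : LinearIndependent K c) {s : Finset ι} {a : ι → D}
    (h : ∀ x, ∑ i ∈ s, a i * x * c i = 0) : ∀ i ∈ s, a i = 0 := by
  classical
  induction s using Finset.induction_on generalizing a with
  | empty => simp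
  | insert j s hj IH =>
    by_cases haj : a j = 0
    · refine Finset.forall_mem_insert _ _ _ |>.mpr ⟨haj, IH fun x => ?_⟩
      simpa [Finset.sum_insert hj, haj] using h x
    exfalso
    set e : ι → D := fun i => (a j)⁻¹ * a i
    have hej : e j = 1 := inv_mul_cancel₀ haj
    have he : ∀ x, ∑ i ∈ insert j s, e i * x * c i = 0 := fun x => by
      simpa [e, Finset.mul_sum, mul_assoc] using congrArg ((a j)⁻¹ * ·) (h x)
    -- the commutators `[e i, w]` satisfy the same relation with vanishing `j`-th coefficient,
    -- so by induction they vanish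
    have hcentral : ∀ i ∈ insert j s, ∃ k : K, e i = algebraMap K D k := by
      refine fun i hi => (Algebra.IsCentral.mem_center_iff K).mp ?_
      rw [Subalgebra.mem_center_iff]
      intro w
      rcases Finset.mem_insert.mp hi with rfl | hi
      · simp [hej]
      · refine (sub_eq_zero.mp (IH (a := fun i => e i * w - w * e i) (fun x => ?_) i hi)).symm
        simpa [Finset.sum_insert hj, hej] using sum_commutator_mul_mul_eq_zero he w x
    choose! k hk using hcentral
    have hsum : ∑ i ∈ insert j s, k i • c i = 0 := by
      rw [← he 1]
      exact Finset.sum_congr rfl fun i hi => by rw [hk i hi, mul_one, Algebra.smul_def]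
    have hkj := linearIndependent_iff'.mp hc _ k hsum j (Finset.mem_insert_self j s)
    simpa [hkj] using hej.symm.trans (hk j (Finset.mem_insert_self j s))

theorem finrank_eq_of_finrank_eq_sq {K P M : Type*} [Field K] [Field P] [Algebra K P]
    [AddCommGroup M] [Module K M] [Module P M] [IsScalarTower K P M] [FiniteDimensional K M]
    [Nontrivial M] (h : finrank K M = finrank K P ^ 2) : finrank P M = finrank K P := by
  have hpos : 0 < finrank K P := (pow_pos_iff two_ne_zero).mp (h ▸ finrank_pos)
  have := finrank_mul_finrank K P M
  rw [h, sq] at this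
  exact Nat.eq_of_mul_eq_mul_left hpos this

theorem smul_eq_mul_smul_one {P D : Type*} [MulOneClass D] [SMul P D] [SMulCommClass D P D]
    (p : P) (x : D) : p • x = x * p • (1 : D) := by
  rw [← smul_eq_mul x, smul_comm, smul_eq_mul, mul_one]

section RightModule

variable {K P D : Type*} [Field K] [Field P] [DivisionRing D] [Algebra K P] [Algebra K D]
  [Module P D] [SMulCommClass D P D] [IsScalarTower K P D]

variable (K P D) in
def tensorProductToEnd : P ⊗[K] D →ₐ[P] Module.End P D :=
  Algebra.TensorProduct.lift (Algebra.ofId P _) (Algebra.lsmul K P D) fun p _ => by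
    rw [Algebra.ofId_apply]; exact Algebra.commute_algebraMap_left p _

theorem tensorProductToEnd_tmul_apply (p : P) (d x : D) :
    tensorProductToEnd K P D (p ⊗ₜ d) x = d * x * p • (1 : D) := by
  rw [tensorProductToEnd, Algebra.TensorProduct.lift_tmul, Module.End.mul_apply,
    Algebra.lsmul_apply, Algebra.ofId_apply, Module.algebraMap_end_apply, smul_eq_mul,
    smul_eq_mul_smul_one]

theorem tensorProductToEnd_injective [Algebra.IsCentral K D] :
    Function.Injective (tensorProductToEnd K P D) := by
  rw [injective_iff_map_eq_zero]
  intro t ht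
  let b := Module.Free.chooseBasis K P
  obtain ⟨c, rfl⟩ := TensorProduct.eq_repr_basis_left b t
  have hind : LinearIndependent K fun i => b i • (1 : D) :=
    b.linearIndependent.map' ((LinearMap.toSpanSingleton P D 1).restrictScalars K)
      (LinearMap.ker_eq_bot.mpr fun p q hpq => by
        simpa using smul_left_injective P one_ne_zero hpq)
  have hrel : ∀ x, ∑ i ∈ c.support, c i * x * b i • (1 : D) = 0 := fun x => by
    simpa [Finsupp.sum, tensorProductToEnd_tmul_apply] using LinearMap.congr_fun ht x
  have hc : c = 0 := Finsupp.ext fun i => by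
    by_cases hi : i ∈ c.support
    · exact Algebra.IsCentral.eq_zero_of_forall_sum_mul_mul_eq_zero hind hrel i hi
    · simpa using hi
  simp [hc]

theorem nonempty_algEquiv_end_of_finrank_eq_sq [Algebra.IsCentral K D] [FiniteDimensional K D]
    (h : finrank K D = finrank K P ^ 2) : Nonempty (P ⊗[K] D ≃ₐ[P] Module.End P D) := by
  have : Module.Finite P D := .of_restrictScalars_finite K P D
  have hdim : finrank P (P ⊗[K] D) = finrank P (Module.End P D) := by
    rw [finrank_baseChange, finrank_linearMap, finrank_eq_of_finrank_eq_sq h, h, sq]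
  have hinj := tensorProductToEnd_injective (K := K) (P := P) (D := D)
  exact ⟨.ofBijective _
    ⟨hinj, (LinearMap.injective_iff_surjective_of_finrank_eq_finrank hdim).mp hinj⟩⟩

end RightModule

theorem nonempty_algEquiv_matrix_of_algHom {K P D : Type*} [Field K] [Field P] [DivisionRing D]
    [Algebra K P] [Algebra K D] [Algebra.IsCentral K D] [FiniteDimensional K D]
    (f : P →ₐ[K] D) (h : finrank K D = finrank K P ^ 2) :
    Nonempty (P ⊗[K] D ≃ₐ[P] Matrix (Fin (finrank K P)) (Fin (finrank K P)) P) := by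
  let : Module P D := .compHom D ((f : P →+* D).toOpposite fun x y => (Commute.all x y).map f)
  have : SMulCommClass D P D := ⟨fun d p x => (mul_assoc d x (f p)).symm⟩
  have : IsScalarTower K P D := ⟨fun k p x => by
    change x * f (k • p) = k • (x * f p)
    rw [map_smul, mul_smul_comm]⟩
  have : Module.Finite P D := .of_restrictScalars_finite K P D
  obtain ⟨e⟩ := nonempty_algEquiv_end_of_finrank_eq_sq h
  exact ⟨e.trans (algEquivMatrix (finBasisOfFinrankEq P D (finrank_eq_of_finrank_eq_sq h)))⟩

section RankOneModule

variable {K P D : Type*} [Field K] [CommRing P] [DivisionRing D] [Algebra K P] [Algebra K D]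
  [FiniteDimensional K D]

theorem nonempty_algHom_of_finrank_eq {V : Type*} [AddCommGroup V] [Module K V] [Module P V]
    [Module D V] [IsScalarTower K P V] [IsScalarTower K D V] [SMulCommClass P D V]
    (h : finrank K V = finrank K D) : Nonempty (P →ₐ[K] D) := by
  have hV : finrank D V = 1 := by
    have := finrank_mul_finrank K D V
    rw [h] at this
    exact (Nat.mul_eq_left finrank_pos.ne').mp this
  have : Module.Finite D V := Module.finite_of_finrank_eq_succ hV
  let e : V ≃ₗ[D] D := .ofFinrankEq V D (by rw [hV, finrank_self])
  let g : P →ₐ[K] Dᵐᵒᵖ := (AlgEquiv.moduleEndSelf K).symm.toAlgHom.comp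
    ((e.conjAlgEquiv K).toAlgHom.comp (Algebra.lsmul K D V))
  exact ⟨AlgHom.unop (g.comp (AlgEquiv.toOpposite K P).symm.toAlgHom)⟩

theorem nonempty_algHom_of_algEquiv_matrix [Nontrivial P] {n : ℕ}
    (e : P ⊗[K] D ≃ₐ[P] Matrix (Fin n) (Fin n) P) (h : finrank K P * n = finrank K D) :
    Nonempty (P →ₐ[K] D) := by
  let ρ : D →ₐ[K] Module.End P (Fin n → P) :=
    ((Matrix.toLinAlgEquiv'.toAlgHom.comp e.toAlgHom).restrictScalars K).comp
      Algebra.TensorProduct.includeRight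
  let : Module D (Fin n → P) := .compHom _ (ρ : D →+* Module.End P (Fin n → P))
  have : IsScalarTower K D (Fin n → P) := ⟨fun k d v => by
    change ρ (k • d) v = k • ρ d v
    rw [map_smul]; rfl⟩
  have : SMulCommClass P D (Fin n → P) := ⟨fun p d v => ((ρ d).map_smul p v).symm⟩
  exact nonempty_algHom_of_finrank_eq (V := Fin n → P)
    (by rw [← finrank_mul_finrank K P, finrank_fin_fun, h])

end RankOneModule

theorem embeds_iff_splits_general
    (K D : Type) [Field K] [DivisionRing D] [Algebra K D]
    [Algebra.IsCentral K D] [FiniteDimensional K D]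
    (n : ℕ) (hdim : Module.finrank K D = n ^ 2)
    (P : Type) [Field P] [Algebra K P] (hdeg : Module.finrank K P = n) :
    (∃ f : P →ₐ[K] D, Function.Injective f) ↔
      Nonempty ((P ⊗[K] D) ≃ₐ[P] Matrix (Fin n) (Fin n) P) := by
  subst hdeg
  constructor
  · rintro ⟨f, -⟩
    exact nonempty_algEquiv_matrix_of_algHom f hdim
  · rintro ⟨e⟩
    obtain ⟨f⟩ := nonempty_algHom_of_algEquiv_matrix e (by rw [hdim, sq])
    exact ⟨f, f.toRingHom.injective⟩

/-- Let `D` be a central division algebra of degree `n` over a field `K` and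
let `P/K` be a field extension of degree `n`. Then `P` admits a `K`-algebra embedding into
`D` if and only if `P` splits `D`, i.e. `D ⊗[K] P ≃ M_n(P)` as `P`-algebras. -/
theorem embeds_iff_splits
    (K D : Type) [Field K] [DivisionRing D] [Algebra K D]
    [Algebra.IsCentral K D] [FiniteDimensional K D]
    (n : ℕ) (hn : 0 < n) (hdim : Module.finrank K D = n ^ 2)
    (P : Type) [Field P] [Algebra K P] (hdeg : Module.finrank K P = n) :
    (∃ f : P →ₐ[K] D, Function.Injective f) ↔
      Nonempty ((P ⊗[K] D) ≃ₐ[P] Matrix (Fin n) (Fin n) P) :=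
  embeds_iff_splits_general K D n hdim P hdeg
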